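/- Let G be a connected graph with an interval colouring c, and suppose there is an edge e = vw such that e is the unique edge of G receiving the colour c₀ = c(e), and c₀ is neither the minimum nor the maximum colour used by c. Then the vertex set of G can be partitioned as V(G) = V₁ ∪ {v,w} ∪ V₂ such that every edge of G incident to a vertex of V₁ has colour strictly less than c₀ and every edge of G incident to a vertex of V₂ has colour strictly greater than c₀. In particular, there are no edges between V₁ and V₂, and the restrictions of c to the induced subgraphs G[V₁ ∪ {v,w}] and G[V₂ ∪ {v,w}] are interval colourings of those subgraphs. -/

import Mathlib

open SimpleGraph

/-- `c` is an interval colouring of `G`: a proper edge colouring such that the set of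
colours of edges incident to any vertex is an interval of integers. -/
def IsIntervalColoring {V : Type*} (G : SimpleGraph V) (c : Sym2 V → ℤ) : Prop :=
  (∀ v : V, ∀ e ∈ G.incidenceSet v, ∀ f ∈ G.incidenceSet v, e ≠ f → c e ≠ c f) ∧
  (∀ v : V, ∀ x : ℤ, (∃ e ∈ G.incidenceSet v, c e ≤ x) →
    (∃ e ∈ G.incidenceSet v, x ≤ c e) → ∃ e ∈ G.incidenceSet v, c e = x)

/-- `G` admits an interval colouring. -/
def IntervalColorable {V : Type*} (G : SimpleGraph V) : Prop :=
  ∃ c : Sym2 V → ℤ, IsIntervalColoring G c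

/-- The edge set of `G` can be partitioned into `k` parts, each spanning an
interval colourable subgraph of `G`. -/
def HasIntervalDecomposition {V : Type*} (G : SimpleGraph V) (k : ℕ) : Prop :=
  ∃ f : Sym2 V → Fin k, ∀ i : Fin k,
    IntervalColorable (SimpleGraph.fromEdgeSet {e | e ∈ G.edgeSet ∧ f e = i})

/-- The interval thickness of `G`: the smallest `k` such that the edge set of `G` can be
partitioned into `k` parts, each spanning an interval colourable subgraph. -/
noncomputable def intervalThickness {V : Type*} (G : SimpleGraph V) : ℕ :=
  sInf {k | HasIntervalDecomposition G k}

/-!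
Since `c₀` appears at no vertex other than `v` and `w`, the interval property forces every other
vertex to see only colours below `c₀` or only colours above it; this sorts the remaining vertices
into `V₁` and `V₂`. An edge from `V₁ ∪ {v, w}` with colour at most `c₀` cannot end in `V₂`, so
every gap in the colours at a vertex of `G[V₁ ∪ {v, w}]` would already be a gap in `G`; the upper
side is the same statement for the colouring `-c`.
-/

section

variable {V : Type*} {G : SimpleGraph V} {c : Sym2 V → ℤ}

lemma SimpleGraph.exists_adj_eq_of_mem_incidenceSet {a : V} {e : Sym2 V}
    (he : e ∈ G.incidenceSet a) : ∃ b, G.Adj a b ∧ e = s(a, b) := by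
  obtain ⟨b, rfl⟩ := Sym2.mem_iff_exists.mp he.2
  exact ⟨b, he.1, rfl⟩

lemma SimpleGraph.exists_adj_of_mem_incidenceSet_induce {S : Set V} {a : S} {e : Sym2 S}
    (he : e ∈ (G.induce S).incidenceSet a) :
    ∃ b : S, G.Adj a b ∧ e = s(a, b) ∧ e.map Subtype.val ∈ G.incidenceSet a := by
  obtain ⟨b, hab, rfl⟩ := exists_adj_eq_of_mem_incidenceSet he
  exact ⟨b, hab, rfl, by simpa using G.mk'_mem_incidenceSet_left_iff.mpr hab⟩

lemma IsIntervalColoring.neg (hc : IsIntervalColoring G c) : IsIntervalColoring G (-c) := by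
  refine ⟨fun x e he f hf hne heq => hc.1 x e he f hf hne (neg_inj.mp heq), ?_⟩
  rintro x t ⟨e₁, he₁, h₁⟩ ⟨e₂, he₂, h₂⟩
  obtain ⟨e, he, hce⟩ := hc.2 x (-t) ⟨e₂, he₂, le_neg.mp h₂⟩ ⟨e₁, he₁, neg_le.mp h₁⟩
  exact ⟨e, he, by simp [hce]⟩

lemma IsIntervalColoring.forall_gt_of_not_forall_lt (hc : IsIntervalColoring G c) {x : V}
    {c₀ : ℤ} (hx : ∀ e ∈ G.incidenceSet x, c e ≠ c₀) (hlow : ¬∀ e ∈ G.incidenceSet x, c e < c₀) :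
    ∀ e ∈ G.incidenceSet x, c₀ < c e := by
  obtain ⟨e₁, he₁, hge⟩ := not_forall₂.mp hlow
  intro e he
  refine (hx e he).symm.lt_of_le (not_lt.mp fun hlt => ?_)
  obtain ⟨f, hf, hcf⟩ := hc.2 x c₀ ⟨e, he, hlt.le⟩ ⟨e₁, he₁, not_lt.mp hge⟩
  exact hx f hf hcf

lemma IsIntervalColoring.induce_of_le (hc : IsIntervalColoring G c) {S : Set V} {t : ℤ}
    (hle : ∀ x ∈ S, ∀ y ∈ S, G.Adj x y → c s(x, y) ≤ t)
    (hclosed : ∀ x ∈ S, ∀ y, G.Adj x y → c s(x, y) ≤ t → y ∈ S) :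
    IsIntervalColoring (G.induce S) (fun e => c (e.map Subtype.val)) := by
  constructor
  · intro a e he f hf hne
    obtain ⟨b, -, rfl, hem⟩ := exists_adj_of_mem_incidenceSet_induce he
    obtain ⟨b', -, rfl, hfm⟩ := exists_adj_of_mem_incidenceSet_induce hf
    exact hc.1 a _ hem _ hfm fun h => hne (Sym2.map.injective Subtype.val_injective h)
  · rintro a u ⟨e₁, he₁, h₁⟩ ⟨e₂, he₂, h₂⟩
    obtain ⟨b₁, -, rfl, hem₁⟩ := exists_adj_of_mem_incidenceSet_induce he₁
    obtain ⟨b₂, hab₂, rfl, hem₂⟩ := exists_adj_of_mem_incidenceSet_induce he₂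
    have hut : u ≤ t := h₂.trans (by simpa using hle a a.2 b₂ b₂.2 hab₂)
    obtain ⟨e, he, hce⟩ := hc.2 a u ⟨_, hem₁, h₁⟩ ⟨_, hem₂, h₂⟩
    obtain ⟨y, hay, rfl⟩ := exists_adj_eq_of_mem_incidenceSet he
    have hyS : y ∈ S := hclosed a a.2 y hay (hce ▸ hut)
    exact ⟨s(a, ⟨y, hyS⟩), (G.induce S).mk'_mem_incidenceSet_left_iff.mpr hay, by simpa using hce⟩

lemma IsIntervalColoring.induce_union_pair (hc : IsIntervalColoring G c) {v w : V} {c₀ : ℤ}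
    (hc₀ : c s(v, w) = c₀) {A B : Set V} (hA : ∀ x ∈ A, ∀ e ∈ G.incidenceSet x, c e < c₀)
    (hB : ∀ x ∈ B, ∀ e ∈ G.incidenceSet x, c₀ < c e) (hcover : ∀ x, x ∈ A ∪ {v, w} ∪ B) :
    IsIntervalColoring (G.induce (A ∪ {v, w})) (fun e => c (e.map Subtype.val)) := by
  refine hc.induce_of_le (t := c₀) ?_ ?_
  · rintro x hx y hy hxy
    rcases hx with hx | hx
    · exact (hA x hx _ (G.mk'_mem_incidenceSet_left_iff.mpr hxy)).le
    rcases hy with hy | hy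
    · exact (hA y hy _ (G.mk'_mem_incidenceSet_right_iff.mpr hxy)).le
    · have : s(x, y) = s(v, w) := by
        rcases hx with rfl | rfl <;> rcases hy with rfl | rfl <;>
          first | exact absurd rfl hxy.ne | simp [Sym2.eq_swap]
      exact (congrArg c this).trans hc₀ |>.le
  · intro x _ y hxy hle
    rcases hcover y with hy | hy
    · exact hy
    · exact absurd hle (hB y hy _ (G.mk'_mem_incidenceSet_right_iff.mpr hxy)).not_ge

end

theorem stmt_13_general {V : Type*} (G : SimpleGraph V)
    (c : Sym2 V → ℤ) (hc : IsIntervalColoring G c)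
    (v w : V) (c₀ : ℤ) (hc₀ : c s(v, w) = c₀)
    (huniq : ∀ e ∈ G.edgeSet, c e = c₀ → e = s(v, w)) :
    ∃ V₁ V₂ : Set V,
      V₁ ∪ {v, w} ∪ V₂ = Set.univ ∧
      Disjoint V₁ V₂ ∧ Disjoint V₁ {v, w} ∧ Disjoint V₂ {v, w} ∧
      (∀ x ∈ V₁, ∀ e ∈ G.incidenceSet x, c e < c₀) ∧
      (∀ x ∈ V₂, ∀ e ∈ G.incidenceSet x, c₀ < c e) ∧
      (∀ x ∈ V₁, ∀ y ∈ V₂, ¬ G.Adj x y) ∧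
      IsIntervalColoring (G.induce (V₁ ∪ {v, w}))
        (fun e => c (e.map Subtype.val)) ∧
      IsIntervalColoring (G.induce (V₂ ∪ {v, w}))
        (fun e => c (e.map Subtype.val)) := by
  set V₁ : Set V := {x | x ∉ ({v, w} : Set V) ∧ ∀ e ∈ G.incidenceSet x, c e < c₀}
  set V₂ : Set V := (V₁ ∪ {v, w})ᶜ
  have hV₁ : ∀ x ∈ V₁, ∀ e ∈ G.incidenceSet x, c e < c₀ := fun x hx => hx.2
  have hV₂ : ∀ x ∈ V₂, ∀ e ∈ G.incidenceSet x, c₀ < c e := by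
    intro x hx
    obtain ⟨hx₁, hx⟩ : x ∉ V₁ ∧ x ∉ ({v, w} : Set V) := by simpa [V₂, not_or] using hx
    refine hc.forall_gt_of_not_forall_lt (fun f hf hcf => hx ?_) (not_and.mp hx₁ hx)
    simpa [huniq f hf.1 hcf] using hf.2
  have hcover : ∀ x, x ∈ V₁ ∪ {v, w} ∪ V₂ := Set.eq_univ_iff_forall.mp (Set.union_compl_self _)
  refine ⟨V₁, V₂, Set.union_compl_self _, disjoint_compl_right.mono_left
    Set.subset_union_left, Set.disjoint_left.mpr fun x hx => hx.1,
    disjoint_compl_left.mono_right Set.subset_union_right, hV₁, hV₂, ?_,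
    hc.induce_union_pair hc₀ hV₁ hV₂ hcover, ?_⟩
  · intro x hx y hy hxy
    exact (hV₁ x hx _ (G.mk'_mem_incidenceSet_left_iff.mpr hxy)).not_gt
      (hV₂ y hy _ (G.mk'_mem_incidenceSet_right_iff.mpr hxy))
  · have hupper := (hc.neg.induce_union_pair (by simp [hc₀]) (v := v) (w := w) (A := V₂) (B := V₁)
      (fun x hx e he => neg_lt_neg (hV₂ x hx e he)) (fun x hx e he => neg_lt_neg (hV₁ x hx e he))
      fun x => by have := hcover x; simp only [Set.mem_union] at this ⊢; tauto).neg
    simpa only [Pi.neg_def, neg_neg] using hupper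

/-- If a connected interval coloured graph has an edge `vw` whose colour `c₀` is unique
and is neither minimal nor maximal, then the vertices split as `V₁ ∪ {v, w} ∪ V₂`, where
all edges at `V₁` have colour `< c₀` and all edges at `V₂` have colour `> c₀`; in
particular there are no edges between `V₁` and `V₂` and the restrictions of the colouring
to `G[V₁ ∪ {v, w}]` and `G[V₂ ∪ {v, w}]` are interval colourings. -/
theorem stmt_13 {V : Type*} (G : SimpleGraph V) (hconn : G.Connected)
    (c : Sym2 V → ℤ) (hc : IsIntervalColoring G c)
    (v w : V) (hvw : G.Adj v w) (c₀ : ℤ) (hc₀ : c s(v, w) = c₀)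
    (huniq : ∀ e ∈ G.edgeSet, c e = c₀ → e = s(v, w))
    (hnotmin : ∃ e ∈ G.edgeSet, c e < c₀)
    (hnotmax : ∃ e ∈ G.edgeSet, c₀ < c e) :
    ∃ V₁ V₂ : Set V,
      V₁ ∪ {v, w} ∪ V₂ = Set.univ ∧
      Disjoint V₁ V₂ ∧ Disjoint V₁ {v, w} ∧ Disjoint V₂ {v, w} ∧
      (∀ x ∈ V₁, ∀ e ∈ G.incidenceSet x, c e < c₀) ∧
      (∀ x ∈ V₂, ∀ e ∈ G.incidenceSet x, c₀ < c e) ∧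
      (∀ x ∈ V₁, ∀ y ∈ V₂, ¬ G.Adj x y) ∧
      IsIntervalColoring (G.induce (V₁ ∪ {v, w}))
        (fun e => c (e.map Subtype.val)) ∧
      IsIntervalColoring (G.induce (V₂ ∪ {v, w}))
        (fun e => c (e.map Subtype.val)) :=
  stmt_13_general G c hc v w c₀ hc₀ huniq
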